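/- arXiv:1608.04305 — 5 statements merged into one kernel-verified Lean document; each statement's English description precedes it below -/
import Mathlib

section
/- Let s₁ ∈ ℝ^{2n×2n} and s₂ ∈ ℝ^{2n×2l} satisfy s₁ σ_{2n} s₁^T + s₂ σ_{2l} s₂^T = σ_{2n} and s₁ s₁^T + s₂ s₂^T = I_{2n}. Then there exist s₃ ∈ ℝ^{2l×2n} and s₄ ∈ ℝ^{2l×2l} such that the block matrix S = [[s₁, s₂], [s₃, s₄]] is both symplectic (with respect to σ_{2n} ⊕ σ_{2l}) and orthogonal. -/
/-!
Mathlib's `J = [[0, -1], [1, 0]]` is `-σ`. A real matrix commuting with `J` is the realification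
of a complex matrix, and realification turns `ᴴ` into `ᵀ` and `i • 1` into `J`. The row block
`R = [s₁ s₂]` (columns regrouped) has orthonormal rows and satisfies `R J Rᵀ = J`; as `J` is
orthogonal this forces `R J = J R`, so `R` is the realification of a complex matrix `N` with
orthonormal rows. Completing the rows of `N` to a unitary matrix `U` and realifying gives the
required extension, since the realification of a unitary matrix is orthogonal and symplectic.
-/

open Matrix

/-- The standard symplectic form `σ_{2k} = [[0, I_k], [-I_k, 0]]`. -/
def symJ (k : ℕ) : Matrix (Fin k ⊕ Fin k) (Fin k ⊕ Fin k) ℝ :=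
  Matrix.fromBlocks 0 1 (-1) 0

namespace Matrix

variable {ι κ τ : Type*}

def realify (N : Matrix ι κ ℂ) : Matrix (ι ⊕ ι) (κ ⊕ κ) ℝ :=
  fromBlocks (N.map Complex.re) (-N.map Complex.im) (N.map Complex.im) (N.map Complex.re)

theorem realify_injective : Function.Injective (realify : Matrix ι κ ℂ → _) := by
  intro N N' h
  simp only [realify, fromBlocks_inj] at h
  ext i j
  exact Complex.ext (congrFun₂ h.1 i j) (congrFun₂ h.2.2.1 i j)

theorem realify_one [DecidableEq ι] : realify (1 : Matrix ι ι ℂ) = 1 := by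
  simp only [realify, ← fromBlocks_one]
  congr 1 <;> ext i j <;> simp [one_apply, apply_ite]

theorem realify_mul [Fintype κ] (N : Matrix ι κ ℂ) (N' : Matrix κ τ ℂ) :
    realify (N * N') = realify N * realify N' := by
  simp only [realify, fromBlocks_multiply]
  congr 1 <;> ext i j <;>
    simp [mul_apply, Complex.re_sum, Complex.im_sum, Complex.mul_re, Complex.mul_im,
      Finset.sum_add_distrib] <;> ring

theorem realify_conjTranspose (N : Matrix ι κ ℂ) : realify Nᴴ = (realify N)ᵀ := by
  ext (i | i) (j | j) <;> simp [realify]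

theorem realify_I_smul_one [DecidableEq ι] :
    realify (Complex.I • (1 : Matrix ι ι ℂ)) = J ι ℝ := by
  simp only [realify, J]
  congr 1 <;> ext i j <;> simp [one_apply, apply_ite]

theorem realify_mul_transpose_eq_one [Fintype κ] [DecidableEq ι] {U : Matrix ι κ ℂ}
    (hU : U * Uᴴ = 1) : realify U * (realify U)ᵀ = 1 := by
  rw [← realify_conjTranspose, ← realify_mul, hU, realify_one]

theorem realify_mul_J_mul_transpose [Fintype κ] [DecidableEq ι] [DecidableEq κ]
    {U : Matrix ι κ ℂ} (hU : U * Uᴴ = 1) : realify U * J κ ℝ * (realify U)ᵀ = J ι ℝ := by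
  rw [← realify_I_smul_one, ← realify_I_smul_one, ← realify_conjTranspose, ← realify_mul,
    ← realify_mul, Matrix.mul_smul, Matrix.mul_one, Matrix.smul_mul, hU]

theorem exists_realify_eq_of_mul_J_eq_J_mul [Fintype ι] [Fintype κ] [DecidableEq ι]
    [DecidableEq κ] (M : Matrix (ι ⊕ ι) (κ ⊕ κ) ℝ) (h : M * J κ ℝ = J ι ℝ * M) :
    ∃ N, realify N = M := by
  obtain ⟨A, B, C, D, rfl⟩ : ∃ A B C D, M = fromBlocks A B C D :=
    ⟨_, _, _, _, (fromBlocks_toBlocks M).symm⟩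
  simp only [J, fromBlocks_multiply, fromBlocks_inj] at h
  have hB : B = -C := by simpa using h.1
  have hD : D = A := by simpa using h.2.2.1
  refine ⟨of fun i j => ⟨A i j, C i j⟩, ?_⟩
  rw [hB, hD]
  rfl

theorem J_mul_transpose_J (α R : Type*) [Fintype α] [DecidableEq α] [CommRing R] :
    J α R * (J α R)ᵀ = 1 := by
  rw [J_transpose, Matrix.mul_neg, J_squared, neg_neg]

theorem mul_eq_mul_of_mul_mul_transpose_eq {m : Type*} [Fintype m] [Fintype κ] [DecidableEq m]
    [DecidableEq κ] {R : Matrix m κ ℝ} {A : Matrix m m ℝ} {B : Matrix κ κ ℝ}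
    (hR : R * Rᵀ = 1) (hA : A * Aᵀ = 1) (hB : B * Bᵀ = 1) (h : R * B * Rᵀ = A) :
    R * B = A * R := by
  -- each of the four terms of `(R * B - A * R) * (R * B - A * R)ᵀ` equals `1`
  have h₁ : R * B * (R * B)ᵀ = 1 := by
    rw [transpose_mul, ← Matrix.mul_assoc, Matrix.mul_assoc R, hB, Matrix.mul_one, hR]
  have h₂ : R * B * (A * R)ᵀ = 1 := by
    rw [transpose_mul, ← Matrix.mul_assoc, h, hA]
  have h₃ : A * R * (R * B)ᵀ = 1 := by
    calc A * R * (R * B)ᵀ = A * (R * B * Rᵀ)ᵀ := by simp [transpose_mul, Matrix.mul_assoc]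
      _ = 1 := by rw [h, hA]
  have h₄ : A * R * (A * R)ᵀ = 1 := by
    rw [transpose_mul, ← Matrix.mul_assoc, Matrix.mul_assoc A, hR, Matrix.mul_one, hA]
  have hsq : (R * B - A * R) * (R * B - A * R)ᵀ = 0 := by
    rw [transpose_sub, Matrix.sub_mul, Matrix.mul_sub, Matrix.mul_sub, h₁, h₂, h₃, h₄]
    abel
  rw [← conjTranspose_eq_transpose_of_trivial, self_mul_conjTranspose_eq_zero] at hsq
  exact sub_eq_zero.mp hsq

theorem exists_realify_eq_of_symplectic_orthogonal [Fintype ι] [Fintype κ] [DecidableEq ι]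
    [DecidableEq κ] (R : Matrix (ι ⊕ ι) (κ ⊕ κ) ℝ) (hJ : R * J κ ℝ * Rᵀ = J ι ℝ)
    (hO : R * Rᵀ = 1) : ∃ N, N * Nᴴ = 1 ∧ realify N = R := by
  obtain ⟨N, rfl⟩ := exists_realify_eq_of_mul_J_eq_J_mul R
    (mul_eq_mul_of_mul_mul_transpose_eq hO (J_mul_transpose_J _ _) (J_mul_transpose_J _ _) hJ)
  refine ⟨N, realify_injective ?_, rfl⟩
  rw [realify_mul, realify_conjTranspose, hO, realify_one]

theorem orthonormal_toLp_iff_mul_conjTranspose_eq_one {𝕜 m μ : Type*} [RCLike 𝕜] [Fintype μ]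
    [DecidableEq m] (M : Matrix m μ 𝕜) :
    Orthonormal 𝕜 (fun i => WithLp.toLp 2 (M i)) ↔ M * Mᴴ = 1 := by
  have : gram 𝕜 (fun i => WithLp.toLp 2 (M i)) = (M * Mᴴ)ᵀ := by
    ext i j
    simp [EuclideanSpace.inner_toLp_toLp, mul_apply, dotProduct]
  rw [← gram_eq_one_iff_orthonormal, this, transpose_eq_one]

theorem exists_fromRows_mul_conjTranspose_eq_one {𝕜 m k μ : Type*} [RCLike 𝕜]
    [Fintype m] [Fintype k] [Fintype μ] [DecidableEq m] [DecidableEq k]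
    (N : Matrix m μ 𝕜) (hN : N * Nᴴ = 1)
    (hcard : Fintype.card μ = Fintype.card m + Fintype.card k) :
    ∃ P : Matrix k μ 𝕜, fromRows N P * (fromRows N P)ᴴ = 1 := by
  let v : m ⊕ k → EuclideanSpace 𝕜 μ := Sum.elim (fun i => WithLp.toLp 2 (N i)) 0
  have hv : Orthonormal 𝕜 ((Set.range Sum.inl).domRestrict v) := by
    rw [orthonormal_iff_ite]
    rintro ⟨_, i, rfl⟩ ⟨_, j, rfl⟩
    simpa [v, Subtype.ext_iff] using
      orthonormal_iff_ite.mp ((orthonormal_toLp_iff_mul_conjTranspose_eq_one N).mpr hN) i j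
  obtain ⟨b, hb⟩ := hv.exists_orthonormalBasis_extension_of_card_eq (by simp [hcard])
  refine ⟨of fun a x => b (.inr a) x, ?_⟩
  have hrows : fromRows N (of fun a x => b (.inr a) x) = of fun a x => b a x := by
    ext (i | a) x
    · simp [hb (.inl i) ⟨i, rfl⟩, v]
    · rfl
  rw [hrows, ← orthonormal_toLp_iff_mul_conjTranspose_eq_one]
  exact b.orthonormal

theorem fromBlocks_J_J {α β R : Type*} [DecidableEq α] [DecidableEq β] [CommRing R] :
    fromBlocks (J α R) 0 0 (J β R) =
      (J (α ⊕ β) R).submatrix (Equiv.sumSumSumComm α α β β) (Equiv.sumSumSumComm α α β β) := by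
  ext ((i | i) | (i | i)) ((j | j) | (j | j)) <;> simp [J, one_apply]

theorem exists_fromBlocks_symplectic_orthogonal {α β : Type*} [Fintype α] [Fintype β]
    [DecidableEq α] [DecidableEq β]
    (s₁ : Matrix (α ⊕ α) (α ⊕ α) ℝ) (s₂ : Matrix (α ⊕ α) (β ⊕ β) ℝ)
    (hJ : s₁ * J α ℝ * s₁ᵀ + s₂ * J β ℝ * s₂ᵀ = J α ℝ) (hO : s₁ * s₁ᵀ + s₂ * s₂ᵀ = 1) :
    ∃ s₃ s₄, fromBlocks s₁ s₂ s₃ s₄ * fromBlocks (J α ℝ) 0 0 (J β ℝ) *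
        (fromBlocks s₁ s₂ s₃ s₄)ᵀ = fromBlocks (J α ℝ) 0 0 (J β ℝ) ∧
      fromBlocks s₁ s₂ s₃ s₄ * (fromBlocks s₁ s₂ s₃ s₄)ᵀ = 1 := by
  set e := Equiv.sumSumSumComm α α β β
  have hJe : J (α ⊕ β) ℝ = (fromBlocks (J α ℝ) 0 0 (J β ℝ)).submatrix e.symm e.symm := by
    rw [fromBlocks_J_J, submatrix_submatrix, Equiv.self_comp_symm, submatrix_id_id]
  obtain ⟨N, hN, hNR⟩ := exists_realify_eq_of_symplectic_orthogonal
    ((fromCols s₁ s₂).submatrix id e.symm)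
    (by simpa [hJe, transpose_submatrix, submatrix_mul_equiv, transpose_fromCols,
      fromCols_mul_fromBlocks, fromCols_mul_fromRows] using hJ)
    (by simpa [transpose_submatrix, submatrix_mul_equiv, transpose_fromCols,
      fromCols_mul_fromRows] using hO)
  obtain ⟨P, hP⟩ := exists_fromRows_mul_conjTranspose_eq_one (k := β) N hN (by simp)
  set S := (realify (fromRows N P)).submatrix e e
  have htop : S.toRows₁ = fromCols s₁ s₂ := by
    -- `e` sends the first row block `α ⊕ α` to `Sum.map inl inl`, i.e. to the rows of `N`
    have : S.toRows₁ = (realify N).submatrix id e := by ext (i | i) c <;> rfl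
    simp [this, hNR]
  refine ⟨S.toRows₂.toCols₁, S.toRows₂.toCols₂, ?_⟩
  rw [← fromRows_fromCols_eq_fromBlocks, ← htop, fromCols_toCols, fromRows_toRows, fromBlocks_J_J]
  simp only [S, e, transpose_submatrix, submatrix_mul_equiv, realify_mul_J_mul_transpose hP,
    realify_mul_transpose_eq_one hP, submatrix_one_equiv, and_self]

end Matrix

theorem symJ_eq_neg_J (k : ℕ) : symJ k = -J (Fin k) ℝ := by
  simp [symJ, J, fromBlocks_neg]

theorem extension_to_orthogonal_symplectic (n l : ℕ)
    (s₁ : Matrix (Fin n ⊕ Fin n) (Fin n ⊕ Fin n) ℝ)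
    (s₂ : Matrix (Fin n ⊕ Fin n) (Fin l ⊕ Fin l) ℝ)
    (hsymp : s₁ * symJ n * s₁ᵀ + s₂ * symJ l * s₂ᵀ = symJ n)
    (horth : s₁ * s₁ᵀ + s₂ * s₂ᵀ = 1) :
    ∃ (s₃ : Matrix (Fin l ⊕ Fin l) (Fin n ⊕ Fin n) ℝ)
      (s₄ : Matrix (Fin l ⊕ Fin l) (Fin l ⊕ Fin l) ℝ),
      (Matrix.fromBlocks s₁ s₂ s₃ s₄) *
          (Matrix.fromBlocks (symJ n) 0 0 (symJ l)) *
          (Matrix.fromBlocks s₁ s₂ s₃ s₄)ᵀ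
        = Matrix.fromBlocks (symJ n) 0 0 (symJ l) ∧
      (Matrix.fromBlocks s₁ s₂ s₃ s₄) * (Matrix.fromBlocks s₁ s₂ s₃ s₄)ᵀ = 1 := by
  simp only [symJ_eq_neg_J, Matrix.mul_neg, Matrix.neg_mul, ← neg_add, neg_inj] at hsymp
  obtain ⟨s₃, s₄, hJ, hO⟩ := exists_fromBlocks_symplectic_orthogonal s₁ s₂ hsymp horth
  have hJ' : fromBlocks (symJ n) 0 0 (symJ l) = -fromBlocks (J (Fin n) ℝ) 0 0 (J (Fin l) ℝ) := by
    simp [symJ_eq_neg_J, fromBlocks_neg]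
  refine ⟨s₃, s₄, ?_, hO⟩
  rw [hJ', Matrix.mul_neg, Matrix.neg_mul, hJ]
end

section
/- Suppose S = [[s₁, s₂], [s₃, s₄]] and S' = [[s₁, s₂], [s₃', s₄']] are both symplectic and orthogonal 2(n+l)×2(n+l) real matrices with the same top row of blocks (s₁ ∈ ℝ^{2n×2n}, s₂ ∈ ℝ^{2n×2l}). Then there exists an orthogonal symplectic matrix o ∈ Sp(2l) ∩ O(2l) such that S' = (I_{2n} ⊕ o) S. -/
open Matrix

/-! `S' = M S` with `M = S' Sᵀ`, which is orthogonal and preserves `σ`. Equality of the top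
block rows of `S` and `S'` forces the top block row of `M` to be `[1, 0]`, and orthogonality
then kills its lower-left block, leaving `I ⊕ o` with `o` orthogonal and preserving `σ_{2l}`. -/

namespace Matrix

variable {m n R : Type*} [Fintype m] [Fintype n] [DecidableEq m] [CommRing R]

theorem mul_mul_transpose_eq_of_fromBlocks {J : Matrix m m R} {J' o : Matrix n n R}
    (h : fromBlocks 1 0 0 o * fromBlocks J 0 0 J' * (fromBlocks 1 0 0 o)ᵀ =
      fromBlocks J 0 0 J') :
    o * J' * oᵀ = J' := by
  simp only [fromBlocks_transpose, fromBlocks_multiply] at h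
  simpa using (fromBlocks_inj.mp h).2.2.2

variable [DecidableEq n]

theorem transpose_mul_mul_eq_of_mul_transpose_eq_one {S σ : Matrix n n R}
    (hS : S * Sᵀ = 1) (h : S * σ * Sᵀ = σ) : Sᵀ * σ * S = σ := by
  have hStS : Sᵀ * S = 1 := mul_eq_one_comm.mp hS
  calc Sᵀ * σ * S = Sᵀ * (S * σ * Sᵀ) * S := by rw [h]
    _ = (Sᵀ * S) * σ * (Sᵀ * S) := by simp only [mul_assoc]
    _ = σ := by rw [hStS, one_mul, mul_one]

theorem mul_transpose_mul_transpose_eq_one {S S' : Matrix n n R}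
    (hS : S * Sᵀ = 1) (hS' : S' * S'ᵀ = 1) : S' * Sᵀ * (S' * Sᵀ)ᵀ = 1 := by
  rw [transpose_mul, transpose_transpose, mul_assoc, ← mul_assoc Sᵀ,
    mul_eq_one_comm.mp hS, one_mul, hS']

theorem mul_transpose_preserves_form {S S' σ : Matrix n n R}
    (hS : S * Sᵀ = 1) (hSσ : S * σ * Sᵀ = σ) (hS'σ : S' * σ * S'ᵀ = σ) :
    S' * Sᵀ * σ * (S' * Sᵀ)ᵀ = σ := by
  rw [transpose_mul, transpose_transpose]
  calc S' * Sᵀ * σ * (S * S'ᵀ) = S' * (Sᵀ * σ * S) * S'ᵀ := by simp only [mul_assoc]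
    _ = σ := by rw [transpose_mul_mul_eq_of_mul_transpose_eq_one hS hSσ, hS'σ]

theorem fromBlocks_mul_transpose_of_top_row_eq {s₁ : Matrix m m R} {s₂ : Matrix m n R}
    {s₃ s₃' : Matrix n m R} {s₄ s₄' : Matrix n n R}
    (h : fromBlocks s₁ s₂ s₃ s₄ * (fromBlocks s₁ s₂ s₃ s₄)ᵀ = 1) :
    fromBlocks s₁ s₂ s₃' s₄' * (fromBlocks s₁ s₂ s₃ s₄)ᵀ =
      fromBlocks 1 0 (s₃' * s₁ᵀ + s₄' * s₂ᵀ) (s₃' * s₃ᵀ + s₄' * s₄ᵀ) := by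
  rw [fromBlocks_transpose, fromBlocks_multiply] at h ⊢
  rw [← fromBlocks_one] at h
  obtain ⟨h₁₁, h₁₂, -, -⟩ := fromBlocks_inj.mp h
  rw [h₁₁, h₁₂]

theorem eq_zero_and_mul_transpose_eq_one_of_fromBlocks {c : Matrix n m R} {o : Matrix n n R}
    (h : fromBlocks (1 : Matrix m m R) 0 c o * (fromBlocks (1 : Matrix m m R) 0 c o)ᵀ = 1) :
    c = 0 ∧ o * oᵀ = 1 := by
  rw [fromBlocks_transpose, fromBlocks_multiply, ← fromBlocks_one] at h
  obtain ⟨-, -, hc, ho⟩ := fromBlocks_inj.mp h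
  simp only [transpose_one, transpose_zero, Matrix.mul_one, Matrix.mul_zero, add_zero] at hc ho
  rw [hc, Matrix.zero_mul, zero_add] at ho
  exact ⟨hc, ho⟩

end Matrix

theorem uniqueness_of_extension (n l : ℕ)
    (s₁ : Matrix (Fin n ⊕ Fin n) (Fin n ⊕ Fin n) ℝ)
    (s₂ : Matrix (Fin n ⊕ Fin n) (Fin l ⊕ Fin l) ℝ)
    (s₃ s₃' : Matrix (Fin l ⊕ Fin l) (Fin n ⊕ Fin n) ℝ)
    (s₄ s₄' : Matrix (Fin l ⊕ Fin l) (Fin l ⊕ Fin l) ℝ)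
    (S S' : Matrix ((Fin n ⊕ Fin n) ⊕ (Fin l ⊕ Fin l))
        ((Fin n ⊕ Fin n) ⊕ (Fin l ⊕ Fin l)) ℝ)
    (hS : S = Matrix.fromBlocks s₁ s₂ s₃ s₄)
    (hS' : S' = Matrix.fromBlocks s₁ s₂ s₃' s₄')
    (σ : Matrix ((Fin n ⊕ Fin n) ⊕ (Fin l ⊕ Fin l))
        ((Fin n ⊕ Fin n) ⊕ (Fin l ⊕ Fin l)) ℝ)
    (hσ : σ = Matrix.fromBlocks (symJ n) 0 0 (symJ l))
    (hSsymp : S * σ * Sᵀ = σ) (hSorth : S * Sᵀ = 1)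
    (hS'symp : S' * σ * S'ᵀ = σ) (hS'orth : S' * S'ᵀ = 1) :
    ∃ o : Matrix (Fin l ⊕ Fin l) (Fin l ⊕ Fin l) ℝ,
      o * symJ l * oᵀ = symJ l ∧ o * oᵀ = 1 ∧
      S' = (Matrix.fromBlocks 1 0 0 o) * S := by
  have hM : S' * Sᵀ = fromBlocks 1 0 (s₃' * s₁ᵀ + s₄' * s₂ᵀ) (s₃' * s₃ᵀ + s₄' * s₄ᵀ) := by
    subst hS hS'
    exact fromBlocks_mul_transpose_of_top_row_eq hSorth
  have hMorth := mul_transpose_mul_transpose_eq_one hSorth hS'orth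
  have hMsymp := mul_transpose_preserves_form hSorth hSsymp hS'symp
  rw [hM] at hMorth hMsymp
  obtain ⟨hc, ho⟩ := eq_zero_and_mul_transpose_eq_one_of_fromBlocks hMorth
  rw [hc, hσ] at hMsymp
  refine ⟨_, mul_mul_transpose_eq_of_fromBlocks hMsymp, ho, ?_⟩
  rw [← hc, ← hM, mul_assoc, mul_eq_one_comm.mp hSorth, mul_one]
end

section
/- If S = [[s₁, s₂], [s₃, s₄]] is a 2(n+l)×2(n+l) orthogonal symplectic matrix (with respect to σ_{2n} ⊕ σ_{2l}, blocks s₁ ∈ ℝ^{2n×2n}, s₂ ∈ ℝ^{2n×2l}), then the matrices Σ̂ := s₂ s₂^T and Σ := s₂ σ_{2l} s₂^T satisfy Σ = σ_{2n} Σ̂ and both Σ̂ and Σ commute with σ_{2n}. -/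
/-!
Orthogonality turns `S σ Sᵀ = σ` into `S σ = σ S`, whose upper right block reads
`s₂ σ_{2l} = σ_{2n} s₂`. Transposing this with the antisymmetry of the forms gives
`s₂ᵀ σ_{2n} = σ_{2l} s₂ᵀ`, and the three identities follow by moving `σ` through `s₂ s₂ᵀ`.
-/

open Matrix

theorem symJ_transpose (k : ℕ) : (symJ k)ᵀ = -symJ k := by
  simp [symJ, fromBlocks_transpose, fromBlocks_neg]

namespace Matrix

variable {m n o R : Type*} [Fintype m] [Fintype n] [Fintype o]

theorem commute_of_mul_mul_transpose_eq [DecidableEq m] [CommRing R] {S σ : Matrix m m R}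
    (hsymp : S * σ * Sᵀ = σ) (horth : S * Sᵀ = 1) : Commute S σ :=
  calc S * σ = S * σ * (Sᵀ * S) := by rw [mul_eq_one_comm.mp horth, Matrix.mul_one]
    _ = σ * S := by rw [← Matrix.mul_assoc, hsymp]

theorem intertwine_of_commute_fromBlocks [Semiring R] {A : Matrix n n R} {B : Matrix n o R}
    {C : Matrix o n R} {D : Matrix o o R} {J : Matrix n n R} {K : Matrix o o R}
    (h : Commute (fromBlocks A B C D) (fromBlocks J 0 0 K)) : B * K = J * B := by
  have h₁₂ := congrArg toBlocks₁₂ h.eq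
  simpa only [fromBlocks_multiply, toBlocks_fromBlocks₁₂, Matrix.mul_zero, Matrix.zero_mul,
    add_zero, zero_add] using h₁₂

theorem transpose_intertwine_of_intertwine [CommRing R] {B : Matrix n o R} {J : Matrix n n R}
    {K : Matrix o o R} (hJ : Jᵀ = -J) (hK : Kᵀ = -K) (hB : B * K = J * B) :
    Bᵀ * J = K * Bᵀ := by
  simpa only [transpose_mul, hJ, hK, Matrix.neg_mul, Matrix.mul_neg, neg_inj, eq_comm]
    using congrArg transpose hB

theorem commute_mul_transpose_of_intertwine [CommRing R] {B : Matrix n o R} {J : Matrix n n R}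
    {K : Matrix o o R} (hJ : Jᵀ = -J) (hK : Kᵀ = -K) (hB : B * K = J * B) :
    Commute (B * Bᵀ) J := by
  calc B * Bᵀ * J = B * K * Bᵀ := by
        rw [Matrix.mul_assoc, transpose_intertwine_of_intertwine hJ hK hB, Matrix.mul_assoc]
    _ = J * (B * Bᵀ) := by rw [hB, Matrix.mul_assoc]

end Matrix

theorem sigma_hat_commutation (n l : ℕ)
    (s₁ : Matrix (Fin n ⊕ Fin n) (Fin n ⊕ Fin n) ℝ)
    (s₂ : Matrix (Fin n ⊕ Fin n) (Fin l ⊕ Fin l) ℝ)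
    (s₃ : Matrix (Fin l ⊕ Fin l) (Fin n ⊕ Fin n) ℝ)
    (s₄ : Matrix (Fin l ⊕ Fin l) (Fin l ⊕ Fin l) ℝ)
    (S : Matrix ((Fin n ⊕ Fin n) ⊕ (Fin l ⊕ Fin l))
        ((Fin n ⊕ Fin n) ⊕ (Fin l ⊕ Fin l)) ℝ)
    (hS : S = Matrix.fromBlocks s₁ s₂ s₃ s₄)
    (σ : Matrix ((Fin n ⊕ Fin n) ⊕ (Fin l ⊕ Fin l))
        ((Fin n ⊕ Fin n) ⊕ (Fin l ⊕ Fin l)) ℝ)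
    (hσ : σ = Matrix.fromBlocks (symJ n) 0 0 (symJ l))
    (hSsymp : S * σ * Sᵀ = σ) (hSorth : S * Sᵀ = 1) :
    s₂ * symJ l * s₂ᵀ = symJ n * (s₂ * s₂ᵀ) ∧
      (s₂ * s₂ᵀ) * symJ n = symJ n * (s₂ * s₂ᵀ) ∧
      (s₂ * symJ l * s₂ᵀ) * symJ n = symJ n * (s₂ * symJ l * s₂ᵀ) := by
  have hcomm := commute_of_mul_mul_transpose_eq hSsymp hSorth
  subst hS hσ
  have hs₂ : s₂ * symJ l = symJ n * s₂ := intertwine_of_commute_fromBlocks hcomm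
  have hSigma : s₂ * symJ l * s₂ᵀ = symJ n * (s₂ * s₂ᵀ) := by rw [hs₂, Matrix.mul_assoc]
  have hSigmaHat : Commute (s₂ * s₂ᵀ) (symJ n) :=
    commute_mul_transpose_of_intertwine (symJ_transpose n) (symJ_transpose l) hs₂
  refine ⟨hSigma, hSigmaHat.eq, ?_⟩
  rw [hSigma]
  exact ((Commute.refl (symJ n)).mul_left hSigmaHat).eq
end

section
/- If γ is a real symmetric 2l×2l matrix with γ ≥ i σ_{2l} (i.e., γ − i σ_{2l} is positive semidefinite as a complex Hermitian matrix), then γ is positive definite; in particular γ is invertible. -/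
/-!
On a real vector `x` the quadratic form of `γ - iσ` is `xᵀγx`, because `σ` is skew-symmetric;
hence `xᵀγx ≥ 0`. If `xᵀγx = 0`, then `x` lies in the kernel of the positive semidefinite
matrix `γ - iσ`, and the imaginary part of `(γ - iσ)x = 0` gives `σx = 0`, so `x = 0` since
`σ` is invertible. Symmetry of `γ` and skew-symmetry of `σ` are the real and imaginary parts
of `γ - iσ` being Hermitian.
-/

open Matrix ComplexOrder

open Complex

lemma transpose_eq_and_transpose_eq_neg_of_isHermitian {n : Type*} {A S : Matrix n n ℝ}
    (h : (A.map ofReal - I • S.map ofReal).IsHermitian) : Aᵀ = A ∧ Sᵀ = -S := by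
  have hentry : ∀ i j, A j i = A i j ∧ S j i = -S i j := fun i j => by
    simpa [Complex.ext_iff] using h.apply i j
  exact ⟨Matrix.ext fun i j => (hentry i j).1, Matrix.ext fun i j => (hentry i j).2⟩

section
variable {n : Type*} [Fintype n]

lemma dotProduct_mulVec_self_eq_zero_of_transpose_eq_neg {S : Matrix n n ℝ} (hS : Sᵀ = -S)
    (x : n → ℝ) : x ⬝ᵥ S *ᵥ x = 0 := by
  have h : x ⬝ᵥ S *ᵥ x = -(x ⬝ᵥ S *ᵥ x) := by
    conv_lhs =>
      rw [dotProduct_mulVec, ← mulVec_transpose, hS, neg_mulVec, neg_dotProduct, dotProduct_comm]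
  linarith

lemma map_ofReal_mulVec (A : Matrix n n ℝ) (x : n → ℝ) :
    A.map ofReal *ᵥ (ofReal ∘ x) = ofReal ∘ (A *ᵥ x) :=
  funext fun i => (ofRealHom.map_mulVec A x i).symm

lemma ofReal_comp_dotProduct (x y : n → ℝ) :
    ofReal ∘ x ⬝ᵥ ofReal ∘ y = ((x ⬝ᵥ y : ℝ) : ℂ) :=
  (ofRealHom.map_dotProduct x y).symm

theorem posDef_of_posSemidef_ofReal_sub_I_smul [DecidableEq n] {A S : Matrix n n ℝ}
    (hS : IsUnit S) (h : (A.map ofReal - I • S.map ofReal).PosSemidef) : A.PosDef := by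
  obtain ⟨hA, hS_skew⟩ := transpose_eq_and_transpose_eq_neg_of_isHermitian h.isHermitian
  refine PosDef.of_dotProduct_mulVec_pos
    (by rwa [IsHermitian, conjTranspose_eq_transpose_of_trivial]) fun x hx => ?_
  rw [star_trivial]
  have hmulVec : (A.map ofReal - I • S.map ofReal) *ᵥ (ofReal ∘ x) =
      ofReal ∘ (A *ᵥ x) - I • ofReal ∘ (S *ᵥ x) := by
    rw [sub_mulVec, smul_mulVec, map_ofReal_mulVec, map_ofReal_mulVec]
  have hquad : star (ofReal ∘ x) ⬝ᵥ (A.map ofReal - I • S.map ofReal) *ᵥ (ofReal ∘ x) =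
      ((x ⬝ᵥ A *ᵥ x : ℝ) : ℂ) := by
    have hstar : star (ofReal ∘ x) = ofReal ∘ x := funext fun i => conj_ofReal (x i)
    rw [hmulVec, hstar, dotProduct_sub, dotProduct_smul, ofReal_comp_dotProduct,
      ofReal_comp_dotProduct, dotProduct_mulVec_self_eq_zero_of_transpose_eq_neg hS_skew]
    simp
  refine lt_of_le_of_ne (by exact_mod_cast hquad ▸ h.dotProduct_mulVec_nonneg _)
    fun hzero => hx ?_
  have hker := (h.dotProduct_mulVec_zero_iff _).mp (by rw [hquad, ← hzero, ofReal_zero])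
  rw [hmulVec] at hker
  apply mulVec_injective_iff_isUnit.mpr hS
  ext i
  simpa using congr_arg (fun v => (v i).im) hker

end

lemma symJ_mul_symJ (k : ℕ) : symJ k * symJ k = -1 := by
  simp [symJ, fromBlocks_multiply, fromBlocks_neg, ← fromBlocks_one]

lemma isUnit_symJ (k : ℕ) : IsUnit (symJ k) :=
  IsUnit.of_mul_eq_one (-symJ k) (by rw [mul_neg, symJ_mul_symJ, neg_neg])

theorem covariance_matrix_posdef_general (l : ℕ)
    (γ : Matrix (Fin l ⊕ Fin l) (Fin l ⊕ Fin l) ℝ)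
    (hγ : Matrix.PosSemidef
      (γ.map Complex.ofReal - Complex.I • (symJ l).map Complex.ofReal)) :
    γ.PosDef ∧ IsUnit γ := by
  have hpd := posDef_of_posSemidef_ofReal_sub_I_smul (isUnit_symJ l) hγ
  exact ⟨hpd, hpd.isUnit⟩

theorem covariance_matrix_posdef (l : ℕ)
    (γ : Matrix (Fin l ⊕ Fin l) (Fin l ⊕ Fin l) ℝ)
    (hγsym : γᵀ = γ)
    (hγ : Matrix.PosSemidef
      (γ.map Complex.ofReal - Complex.I • (symJ l).map Complex.ofReal)) :
    γ.PosDef ∧ IsUnit γ :=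
  covariance_matrix_posdef_general l γ hγ
end

section
/- Let s₂, s₂' ∈ ℝ^{2n×2l} both be injective with s₂ s₂^T = s₂' (s₂')^T. Then o := s₂^+ s₂' is an orthogonal 2l×2l matrix and s₂' = s₂ o. If moreover s₂ σ_{2l} s₂^T = s₂' σ_{2l} (s₂')^T, then o is also symplectic: o σ_{2l} o^T = σ_{2l}. -/
open Matrix

/-!
Since `s₂` is injective, `s₂⁺ s₂ = 1`, and `s₂ s₂⁺` is the orthogonal projection onto the
column space of `s₂`. Equal Gram matrices `s₂ s₂ᵀ = s₂' s₂'ᵀ` force the columns of `s₂'` into that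
column space, so `s₂ o = s₂ s₂⁺ s₂' = s₂'`. Finally, any form `M` preserved in the sense
`s₂ M s₂ᵀ = s₂' M s₂'ᵀ` is carried over to `o M oᵀ = s₂⁺ s₂ M (s₂⁺ s₂)ᵀ = M`; take `M = 1` and
`M = σ_{2l}`.
-/

namespace Matrix

variable {m n R : Type*} [Fintype m] [Fintype n]

theorem mul_eq_one_of_mul_mul_self [DecidableEq n] [CommSemiring R] {A : Matrix m n R}
    {P : Matrix n m R} (hA : Function.Injective A.mulVec) (h : A * P * A = A) : P * A = 1 :=
  ext_iff_mulVec.2 fun v => hA <| by rw [mulVec_mulVec, ← Matrix.mul_assoc, h, one_mulVec]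

theorem mul_eq_self_of_mul_conjTranspose_eq [CommRing R] [PartialOrder R] [StarRing R]
    [StarOrderedRing R] [NoZeroDivisors R] {Q : Matrix m m R} {A B : Matrix m n R}
    (hQ : Qᴴ = Q) (hQA : Q * A = A) (h : A * Aᴴ = B * Bᴴ) : Q * B = B := by
  have hleft : Q * (B * Bᴴ) = B * Bᴴ := by rw [← h, ← Matrix.mul_assoc, hQA]
  have hright : B * Bᴴ * Q = B * Bᴴ := by
    simpa [Matrix.conjTranspose_mul, hQ] using congrArg conjTranspose hleft
  have : (B - Q * B) * (B - Q * B)ᴴ = 0 := by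
    simp only [Matrix.sub_mul, Matrix.mul_sub, conjTranspose_sub, conjTranspose_mul, hQ]
    rw [← Matrix.mul_assoc, hright, Matrix.mul_assoc, hleft, ← Matrix.mul_assoc,
      Matrix.mul_assoc Q, hleft, hright]
    abel
  exact (sub_eq_zero.1 (self_mul_conjTranspose_eq_zero.1 this)).symm

theorem mul_mul_transpose_eq_of_mul_eq_one [DecidableEq n] [CommSemiring R] {P : Matrix n m R}
    {A B : Matrix m n R} {M : Matrix n n R} (hPA : P * A = 1) (h : A * M * Aᵀ = B * M * Bᵀ) :
    P * B * M * (P * B)ᵀ = M :=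
  calc P * B * M * (P * B)ᵀ = P * (B * M * Bᵀ) * Pᵀ := by
        simp only [transpose_mul, Matrix.mul_assoc]
    _ = P * A * M * (P * A)ᵀ := by simp only [← h, transpose_mul, Matrix.mul_assoc]
    _ = M := by rw [hPA, transpose_one, Matrix.one_mul, Matrix.mul_one]

end Matrix

theorem minimal_dilations_related_by_orthogonal_general (n l : ℕ)
    (s₂ s₂' : Matrix (Fin n ⊕ Fin n) (Fin l ⊕ Fin l) ℝ)
    (hinj : Function.Injective s₂.mulVec)
    (hgram : s₂ * s₂ᵀ = s₂' * s₂'ᵀ)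
    -- `p` is the Moore–Penrose pseudoinverse of `s₂`:
    (p : Matrix (Fin l ⊕ Fin l) (Fin n ⊕ Fin n) ℝ)
    (hp1 : s₂ * p * s₂ = s₂)
    (hp3 : (s₂ * p)ᵀ = s₂ * p)
    (o : Matrix (Fin l ⊕ Fin l) (Fin l ⊕ Fin l) ℝ)
    (ho : o = p * s₂') :
    o * oᵀ = 1 ∧ s₂' = s₂ * o ∧
      (s₂ * symJ l * s₂ᵀ = s₂' * symJ l * s₂'ᵀ → o * symJ l * oᵀ = symJ l) := by
  subst ho
  have hps : p * s₂ = 1 := mul_eq_one_of_mul_mul_self hinj hp1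
  have hproj : s₂ * p * s₂' = s₂' :=
    mul_eq_self_of_mul_conjTranspose_eq (by simpa using hp3) hp1 (by simpa using hgram)
  refine ⟨?_, by rw [← Matrix.mul_assoc, hproj], mul_mul_transpose_eq_of_mul_eq_one hps⟩
  simpa using mul_mul_transpose_eq_of_mul_eq_one (M := 1) hps (by rwa [Matrix.mul_one, Matrix.mul_one])

theorem minimal_dilations_related_by_orthogonal (n l : ℕ)
    (s₂ s₂' : Matrix (Fin n ⊕ Fin n) (Fin l ⊕ Fin l) ℝ)
    (hinj : Function.Injective s₂.mulVec)
    (hinj' : Function.Injective s₂'.mulVec)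
    (hgram : s₂ * s₂ᵀ = s₂' * s₂'ᵀ)
    -- `p` is the Moore–Penrose pseudoinverse of `s₂`:
    (p : Matrix (Fin l ⊕ Fin l) (Fin n ⊕ Fin n) ℝ)
    (hp1 : s₂ * p * s₂ = s₂) (hp2 : p * s₂ * p = p)
    (hp3 : (s₂ * p)ᵀ = s₂ * p) (hp4 : (p * s₂)ᵀ = p * s₂)
    (o : Matrix (Fin l ⊕ Fin l) (Fin l ⊕ Fin l) ℝ)
    (ho : o = p * s₂') :
    o * oᵀ = 1 ∧ s₂' = s₂ * o ∧
      (s₂ * symJ l * s₂ᵀ = s₂' * symJ l * s₂'ᵀ → o * symJ l * oᵀ = symJ l) :=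
  minimal_dilations_related_by_orthogonal_general n l s₂ s₂' hinj hgram p hp1 hp3 o ho
end
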